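/- For any walk P ending at v and any edge f = (v, v'), every maneuver that is a subwalk of P.f but not a subwalk of P must be a suffix of X.f, where X = chi(P) is the longest suffix of P lying in Prefix^<(M). (This justifies the penalty increment computed during edge relaxation.) -/

import Mathlib

open scoped Classical

variable {V E : Type}

/-- A "pre-walk": a start vertex together with a list of edges.  In a directed
graph given by source/target maps `s t : E → V`, it is an actual walk when the
chain condition `IsWalk` holds. -/
structure PreWalk (V E : Type) where
  start : V
  edges : List E

namespace PreWalk

/-- Chain condition: the edges consecutively match starting from `v`. -/
def IsWalkFrom (s t : E → V) : V → List E → Prop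
  | _, [] => True
  | v, e :: es => s e = v ∧ IsWalkFrom s t (t e) es

/-- `P` is a walk in the graph with source map `s` and target map `t`. -/
def IsWalk (s t : E → V) (P : PreWalk V E) : Prop :=
  IsWalkFrom s t P.start P.edges

/-- The final vertex of a walk. -/
def fin (t : E → V) (P : PreWalk V E) : V :=
  P.edges.foldl (fun _ e => t e) P.start

/-- Concatenation of walks (joining at the common endpoint). -/
def append (P Q : PreWalk V E) : PreWalk V E :=
  ⟨P.start, P.edges ++ Q.edges⟩

/-- Appending a single edge to a walk. -/
def appendEdge (P : PreWalk V E) (f : E) : PreWalk V E :=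
  ⟨P.start, P.edges ++ [f]⟩

/-- The weight of a walk w.r.t. an edge weighting `w`. -/
def weight (w : E → ℝ) (P : PreWalk V E) : ℝ :=
  (P.edges.map w).sum

/-- `Q` is a prefix of `P`. -/
def IsPrefix (Q P : PreWalk V E) : Prop :=
  Q.start = P.start ∧ Q.edges <+: P.edges

/-- The prefix of `P` consisting of the first `i` edges. -/
def prefixAt (P : PreWalk V E) (i : ℕ) : PreWalk V E :=
  ⟨P.start, P.edges.take i⟩

/-- `Q` is a suffix of `P` (target map `t` is needed to compute the start of the suffix). -/
def IsSuffix (t : E → V) (Q P : PreWalk V E) : Prop :=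
  ∃ i ≤ P.edges.length, Q = ⟨(P.prefixAt i).fin t, P.edges.drop i⟩

/-- The subwalk of `P` from position `i` to position `j`. -/
def subAt (t : E → V) (P : PreWalk V E) (i j : ℕ) : PreWalk V E :=
  ⟨(P.prefixAt i).fin t, (P.edges.drop i).take (j - i)⟩

/-- `Q` occurs as a (contiguous) subwalk of `P`. -/
def IsSubwalk (t : E → V) (Q P : PreWalk V E) : Prop :=
  ∃ i j, i ≤ j ∧ j ≤ P.edges.length ∧ Q = P.subAt t i j

/-- The reversal of a walk (edges are kept, to be reinterpreted in the reverse graph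
where the source and target maps are swapped). -/
def reverse (t : E → V) (P : PreWalk V E) : PreWalk V E :=
  ⟨P.fin t, P.edges.reverse⟩

end PreWalk

/-- `X` is a nontrivial (at least one edge) prefix of `M0`. -/
def NontrivPrefix (X M0 : PreWalk V E) : Prop :=
  X.IsPrefix M0 ∧ X.edges ≠ []

/-- The penalized weight `|P|_w^M` of a walk: its ordinary weight plus the sum of the
penalties of all occurrences of maneuvers of `Mset` as subwalks of `P`
(occurrences counted positionally, i.e. with multiplicity). -/
noncomputable def penWeight (t : E → V) (w : E → ℝ) (Mset : Set (PreWalk V E))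
    (Δ : PreWalk V E → EReal) (P : PreWalk V E) : EReal :=
  (P.weight w : EReal) +
    ∑ i ∈ Finset.range (P.edges.length + 1), ∑ j ∈ Finset.range (P.edges.length + 1),
      if i ≤ j ∧ P.subAt t i j ∈ Mset then Δ (P.subAt t i j) else 0

/-- A walk is valid: finite penalized weight, and every restricted maneuver
(penalty `0`) entered (a nontrivial prefix occurs as a subwalk) is either wholly
contained in `P`, or `P` ends inside it (some suffix of `P` is a subwalk of it). -/
noncomputable def ValidWalk (t : E → V) (w : E → ℝ) (Mset : Set (PreWalk V E))
    (Δ : PreWalk V E → EReal) (P : PreWalk V E) : Prop :=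
  penWeight t w Mset Δ P < ⊤ ∧
    ∀ M0 ∈ Mset, Δ M0 = 0 →
      ∀ X, NontrivPrefix X M0 → X.IsSubwalk t P →
        M0.IsSubwalk t P ∨ ∃ S : PreWalk V E, S.IsSuffix t P ∧ S.IsSubwalk t M0

/-- Proper prefixes of maneuvers: `Prefix^<(M)`. -/
def ProperPrefixes (Mset : Set (PreWalk V E)) : Set (PreWalk V E) :=
  {X | ∃ M0 ∈ Mset, X.IsPrefix M0 ∧ X ≠ M0}

/-- The maneuver-prefix set `X_M(v)`: all proper prefixes of maneuvers ending at `v`,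
together with the empty walk at `v`. -/
def contextSet (t : E → V) (Mset : Set (PreWalk V E)) (v : V) : Set (PreWalk V E) :=
  {X | (X ∈ ProperPrefixes Mset ∧ X.fin t = v) ∨ X = ⟨v, []⟩}

/-- The candidate set `(Suffix(P) ∩ Prefix^<(M)) ∪ {∅}` for the context of the end of `P`. -/
def ctxCandidates (t : E → V) (Mset : Set (PreWalk V E)) (P : PreWalk V E) :
    Set (PreWalk V E) :=
  {X | X.IsSuffix t P ∧ X ∈ ProperPrefixes Mset} ∪ {⟨P.fin t, []⟩}

/-- `Q2` overhangs `Q1`: a nontrivial prefix of `Q2` is a suffix of `Q1`. -/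
def Overhangs (t : E → V) (Q1 Q2 : PreWalk V E) : Prop :=
  ∃ X, NontrivPrefix X Q2 ∧ X.IsSuffix t Q1

/-- The list of vertices of a walk. -/
def vertsOf (t : E → V) (P : PreWalk V E) : List V :=
  P.start :: P.edges.map t

/-- Ordinary shortest-walk distance from `u` to `v` (as an extended real; `⊤` if no walk). -/
noncomputable def deltaOrd (s t : E → V) (w : E → ℝ) (u v : V) : EReal :=
  sInf {c | ∃ P : PreWalk V E, P.IsWalk s t ∧ P.start = u ∧ P.fin t = v ∧
    c = (P.weight w : EReal)}

/-- Penalized distance `δ_w^M(u,v)`: infimum of penalized weights of valid walks from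
`u` to `v` (`⊤` if there is none). -/
noncomputable def deltaM (s t : E → V) (w : E → ℝ) (Mset : Set (PreWalk V E))
    (Δ : PreWalk V E → EReal) (u v : V) : EReal :=
  sInf {c | ∃ P : PreWalk V E, P.IsWalk s t ∧ P.start = u ∧ P.fin t = v ∧
    ValidWalk t w Mset Δ P ∧ c = penWeight t w Mset Δ P}

/-- The sum of penalties of maneuver occurrences in `P1.P2` straddling the junction. -/
noncomputable def straddleSum (t : E → V) (Mset : Set (PreWalk V E))
    (Δ : PreWalk V E → EReal) (P1 P2 : PreWalk V E) : EReal :=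
  let P := P1.append P2
  let n := P1.edges.length
  ∑ i ∈ Finset.range (P.edges.length + 1), ∑ j ∈ Finset.range (P.edges.length + 1),
    if i < n ∧ n < j ∧ j ≤ P.edges.length ∧ P.subAt t i j ∈ Mset then Δ (P.subAt t i j) else 0

/-! A maneuver occurrence in `P.f` that does not occur in `P` must use `f`, so it is `Y.f` for a
suffix `Y` of `P`. Such a `Y` is a proper prefix of a maneuver, hence a candidate for `χ(P)`, and
maximality of `X = χ(P)` forces `Y` to be a suffix of `X`; thus `Y.f` is a suffix of `X.f`. -/

namespace PreWalk

variable (t : E → V)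

def suffixAt (P : PreWalk V E) (i : ℕ) : PreWalk V E :=
  ⟨(P.prefixAt i).fin t, P.edges.drop i⟩

variable {t}

theorem isSuffix_iff {Q P : PreWalk V E} :
    Q.IsSuffix t P ↔ ∃ i ≤ P.edges.length, Q = P.suffixAt t i :=
  Iff.rfl

@[simp]
theorem length_edges_suffixAt (P : PreWalk V E) (i : ℕ) :
    (P.suffixAt t i).edges.length = P.edges.length - i :=
  List.length_drop

@[simp]
theorem length_edges_appendEdge (P : PreWalk V E) (f : E) :
    (P.appendEdge f).edges.length = P.edges.length + 1 :=
  List.length_append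

theorem fin_mk_append (v : V) (l₁ l₂ : List E) :
    fin t ⟨v, l₁ ++ l₂⟩ = fin t ⟨fin t ⟨v, l₁⟩, l₂⟩ := by
  simp only [fin, List.foldl_append]

theorem suffixAt_length (P : PreWalk V E) : P.suffixAt t P.edges.length = ⟨P.fin t, []⟩ := by
  simp [suffixAt, prefixAt, fin]

theorem suffixAt_suffixAt (P : PreWalk V E) (k m : ℕ) :
    (P.suffixAt t k).suffixAt t m = P.suffixAt t (k + m) := by
  simp only [suffixAt, prefixAt, List.drop_drop, List.take_add, fin_mk_append]

theorem subAt_length (P : PreWalk V E) (i : ℕ) :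
    P.subAt t i P.edges.length = P.suffixAt t i := by
  simp [subAt, suffixAt]

theorem suffixAt_appendEdge (P : PreWalk V E) (f : E) {k : ℕ} (hk : k ≤ P.edges.length) :
    (P.appendEdge f).suffixAt t k = (P.suffixAt t k).appendEdge f := by
  simp [suffixAt, appendEdge, prefixAt, List.take_append_of_le_length hk,
    List.drop_append_of_le_length hk]

theorem subAt_appendEdge (P : PreWalk V E) (f : E) {i j : ℕ} (hij : i ≤ j)
    (hj : j ≤ P.edges.length) : (P.appendEdge f).subAt t i j = P.subAt t i j := by
  have hi : i ≤ P.edges.length := hij.trans hj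
  simp only [subAt, appendEdge, prefixAt, List.take_append_of_le_length hi,
    List.drop_append_of_le_length hi]
  rw [List.take_append_of_le_length (by simp; omega)]

theorem isSuffix_suffixAt_of_le (P : PreWalk V E) {k i : ℕ} (hki : k ≤ i)
    (hi : i ≤ P.edges.length) : (P.suffixAt t i).IsSuffix t (P.suffixAt t k) := by
  refine isSuffix_iff.mpr ⟨i - k, by simp; omega, ?_⟩
  rw [suffixAt_suffixAt, Nat.add_sub_cancel' hki]

theorem IsSubwalk.isSuffix_appendEdge {M P : PreWalk V E} {f : E}
    (hM : M.IsSubwalk t (P.appendEdge f)) (hMP : ¬ M.IsSubwalk t P) :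
    M.IsSuffix t (P.appendEdge f) := by
  obtain ⟨i, j, hij, hj, rfl⟩ := hM
  have hjP : j = (P.appendEdge f).edges.length := by
    by_contra hjP
    rw [length_edges_appendEdge] at hj hjP
    exact hMP ⟨i, j, hij, by omega, subAt_appendEdge P f hij (by omega)⟩
  exact isSuffix_iff.mpr ⟨i, hij.trans hj, by rw [hjP, subAt_length]⟩

end PreWalk

open PreWalk

theorem mem_properPrefixes_of_appendEdge_mem {Mset : Set (PreWalk V E)} {Y : PreWalk V E}
    {f : E} (hY : Y.appendEdge f ∈ Mset) : Y ∈ ProperPrefixes Mset :=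
  ⟨_, hY, ⟨rfl, List.prefix_append _ _⟩, fun h => by
    simpa [appendEdge] using congrArg (fun Q : PreWalk V E => Q.edges.length) h⟩

theorem isSuffix_of_mem_ctxCandidates {t : E → V} {Mset : Set (PreWalk V E)}
    {P X : PreWalk V E} (hX : X ∈ ctxCandidates t Mset P) : X.IsSuffix t P := by
  rcases hX with ⟨hXP, -⟩ | rfl
  · exact hXP
  · exact isSuffix_iff.mpr ⟨_, le_rfl, (suffixAt_length P).symm⟩

theorem stmt12_general (t : E → V) (Mset : Set (PreWalk V E))
    (P X : PreWalk V E) (f : E)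
    (hXmem : X ∈ ctxCandidates t Mset P)
    (hXmax : ∀ Y ∈ ctxCandidates t Mset P, Y.edges.length ≤ X.edges.length) :
    ∀ M0 ∈ Mset, M0.IsSubwalk t (P.appendEdge f) → ¬ M0.IsSubwalk t P →
      M0.IsSuffix t (X.appendEdge f) := by
  intro M0 hM0 hsub hnsub
  obtain ⟨i, hi, rfl⟩ := isSuffix_iff.mp (hsub.isSuffix_appendEdge hnsub)
  obtain ⟨k, hk, rfl⟩ := isSuffix_iff.mp (isSuffix_of_mem_ctxCandidates hXmem)
  have hki : k ≤ i := by
    rcases Nat.lt_or_ge P.edges.length i with hPi | hiP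
    · omega
    have hY : P.suffixAt t i ∈ ctxCandidates t Mset P :=
      Or.inl ⟨⟨i, hiP, rfl⟩,
        mem_properPrefixes_of_appendEdge_mem (by rwa [← suffixAt_appendEdge P f hiP])⟩
    have hlen := hXmax _ hY
    simp only [length_edges_suffixAt] at hlen
    omega
  rw [← suffixAt_appendEdge P f hk]
  exact isSuffix_suffixAt_of_le _ hki hi

/-- Every maneuver that is a subwalk of `P.f` but not of `P` is a suffix of `X.f`,
where `X = χ(P)` is the longest suffix of `P` lying in `Prefix^<(M) ∪ {∅}`. -/
theorem stmt12 (s t : E → V) (Mset : Set (PreWalk V E))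
    (P X : PreWalk V E) (f : E)
    (hP : P.IsWalk s t) (hf : s f = P.fin t)
    (hXmem : X ∈ ctxCandidates t Mset P)
    (hXmax : ∀ Y ∈ ctxCandidates t Mset P, Y.edges.length ≤ X.edges.length) :
    ∀ M0 ∈ Mset, M0.IsSubwalk t (P.appendEdge f) → ¬ M0.IsSubwalk t P →
      M0.IsSuffix t (X.appendEdge f) :=
  stmt12_general t Mset P X f hXmem hXmax
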